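/- Let n, m ≥ 2 and let F : ℝ₊ⁿ → Sₘ be continuously differentiable and monotonically non-increasing. Let x ∈ ℝ₊ⁿ be such that F'(x)((n−1)e_j' − e_j) ⋠ 0 for all j ∈ {1,…,n}, and set λ := min over j ∈ {1,…,n} of λ_max(F'(x)((n−1)e_j' − e_j)). Then for every d ∈ ℝⁿ: if λ_max(F'(x)d) < λ‖d‖∞/(n−1), then min_{j=1,…,n} d_j > −(1/(n−1)) · max_{j=1,…,n} d_j. -/

import Mathlib

attribute [local instance] Matrix.frobeniusNormedAddCommGroup Matrix.frobeniusNormedSpace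

noncomputable section

/-- The open positive orthant `ℝ₊ⁿ` in `ℝⁿ`. -/
def posOrth (n : ℕ) : Set (Fin n → ℝ) := {x | ∀ i, 0 < x i}

/-- The Loewner order on real matrices: `A ⪯ B` iff `B - A` is positive semidefinite. -/
def loewnerLE {m : ℕ} (A B : Matrix (Fin m) (Fin m) ℝ) : Prop := (B - A).PosSemidef

/-- The largest eigenvalue `λ_max` of a real (symmetric) matrix. -/
noncomputable def lambdaMax {m : ℕ} (A : Matrix (Fin m) (Fin m) ℝ) : ℝ :=
  sSup {r : ℝ | ∃ v : Fin m → ℝ, v ≠ 0 ∧ A.mulVec v = r • v}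

/-- The spectral norm `‖·‖₂` of a real matrix (operator norm on Euclidean space). -/
noncomputable def spectralNorm_ {m : ℕ} (A : Matrix (Fin m) (Fin m) ℝ) : ℝ :=
  ‖LinearMap.toContinuousLinearMap (Matrix.toEuclideanLin A)‖

/-- `e_j`, the `j`-th standard unit vector of `ℝⁿ`. -/
def unitVec (n : ℕ) (j : Fin n) : Fin n → ℝ := Pi.single j 1

/-- `e_j' = 𝟙 - e_j`. -/
def coVec (n : ℕ) (j : Fin n) : Fin n → ℝ := (fun _ => (1:ℝ)) - Pi.single j 1

/-- The direction `(n-1) e_j' - e_j`. -/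
noncomputable def dirVec (n : ℕ) (j : Fin n) : Fin n → ℝ :=
  ((n:ℝ) - 1) • coVec n j - unitVec n j

/-- `z_{j,k} = (a/2) e_j' + (a + k·a/(4(n-1))) e_j`. -/
noncomputable def zVec (n : ℕ) (a : ℝ) (j : Fin n) (k : ℤ) : Fin n → ℝ :=
  (a/2) • coVec n j + (a + (k:ℝ) * a / (4 * ((n:ℝ) - 1))) • unitVec n j

/-- `d_j = ((2b-a)/a)(n-1) e_j' - (1/2) e_j`. -/
noncomputable def dVec (n : ℕ) (a b : ℝ) (j : Fin n) : Fin n → ℝ :=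
  ((2*b - a)/a * ((n:ℝ) - 1)) • coVec n j - (1/2 : ℝ) • unitVec n j

/-- `K = ⌈4(n-1)b/a⌉ - 4n - 3`. -/
noncomputable def Kbound (n : ℕ) (a b : ℝ) : ℤ := ⌈4 * ((n:ℝ) - 1) * b / a⌉ - 4 * (n:ℤ) - 3

/-! If `min d ≤ -(max d)/(n-1)`, let `-c` be the minimum of `d`, attained at `j`. Then `c ≥ 0`,
`‖d‖∞ ≤ (n-1)c` and `d ≤ c • ((n-1)e_j' - e_j)` entrywise, so monotonicity of `F` gives
`F'(x)d ⪰ c • F'(x)((n-1)e_j' - e_j)`. As `λ_max` is Loewner-monotone and `λ ≥ 0`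
(a symmetric matrix that is not negative semidefinite has a positive eigenvalue),
`λ_max(F'(x)d) ≥ cλ ≥ λ‖d‖∞/(n-1)`. -/

open Matrix

theorem Matrix.exists_mulVec_eq_smul_iff_mem_spectrum {K ι : Type*} [Field K] [Fintype ι]
    [DecidableEq ι] (A : Matrix ι ι K) (r : K) :
    (∃ v ≠ 0, A *ᵥ v = r • v) ↔ r ∈ spectrum K A := by
  rw [← spectrum_toLin', ← Module.End.hasEigenvalue_iff_mem_spectrum,
    Module.End.hasEigenvalue_iff, Submodule.ne_bot_iff]
  simp only [Module.End.mem_eigenspace_iff, toLin'_apply]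
  exact ⟨fun ⟨v, hv, h⟩ => ⟨v, h, hv⟩, fun ⟨v, h, hv⟩ => ⟨v, hv, h⟩⟩

section LambdaMax

variable {m : ℕ} {A B : Matrix (Fin m) (Fin m) ℝ}

theorem lambdaMax_eq_sSup_spectrum (A : Matrix (Fin m) (Fin m) ℝ) :
    lambdaMax A = sSup (spectrum ℝ A) :=
  congrArg sSup (Set.ext fun r => exists_mulVec_eq_smul_iff_mem_spectrum A r)

theorem le_lambdaMax_of_mem_spectrum {r : ℝ} (hr : r ∈ spectrum ℝ A) : r ≤ lambdaMax A :=
  lambdaMax_eq_sSup_spectrum A ▸ le_csSup A.finite_spectrum.bddAbove hr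

theorem lambdaMax_mem_spectrum [NeZero m] (hA : A.IsHermitian) :
    lambdaMax A ∈ spectrum ℝ A := by
  rw [lambdaMax_eq_sSup_spectrum, hA.spectrum_real_eq_range_eigenvalues]
  exact (Set.range_nonempty _).csSup_mem (Set.finite_range _)

theorem posSemidef_lambdaMax_smul_one_sub (hA : A.IsHermitian) :
    (lambdaMax A • 1 - A).PosSemidef := by
  have hN : (lambdaMax A • 1 - A).IsHermitian :=
    (isHermitian_one.smul (IsSelfAdjoint.all _)).sub hA
  refine hN.posSemidef_iff_eigenvalues_nonneg.mpr fun i => ?_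
  have hi := hN.eigenvalues_mem_spectrum_real i
  generalize hN.eigenvalues i = r at hi ⊢
  rw [← Algebra.algebraMap_eq_smul_one, ← spectrum.singleton_sub_eq] at hi
  obtain ⟨_, rfl, s, hs, hsi⟩ := hi
  simpa [← hsi] using le_lambdaMax_of_mem_spectrum hs

theorem dotProduct_mulVec_le_lambdaMax_mul (hA : A.IsHermitian) (v : Fin m → ℝ) :
    v ⬝ᵥ A *ᵥ v ≤ lambdaMax A * (v ⬝ᵥ v) := by
  have h := (posSemidef_lambdaMax_smul_one_sub hA).dotProduct_mulVec_nonneg v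
  rw [star_trivial, sub_mulVec, smul_mulVec, one_mulVec, dotProduct_sub, dotProduct_smul,
    smul_eq_mul] at h
  linarith

theorem lambdaMax_pos_of_not_loewnerLE_zero (hA : A.IsHermitian) (h : ¬ loewnerLE A 0) :
    0 < lambdaMax A := by
  refine lt_of_not_ge fun hle => h ?_
  have := (posSemidef_lambdaMax_smul_one_sub hA).add (PosSemidef.one.smul (neg_nonneg.mpr hle))
  rw [loewnerLE, zero_sub]
  convert this using 1
  rw [neg_smul]
  abel

theorem exists_mulVec_eq_lambdaMax_smul [NeZero m] (hA : A.IsHermitian) :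
    ∃ v ≠ 0, A *ᵥ v = lambdaMax A • v :=
  (exists_mulVec_eq_smul_iff_mem_spectrum A _).mpr (lambdaMax_mem_spectrum hA)

theorem lambdaMax_mono [NeZero m] (hA : A.IsHermitian) (hB : B.IsHermitian)
    (h : loewnerLE A B) : lambdaMax A ≤ lambdaMax B := by
  obtain ⟨v, hv, hAv⟩ := exists_mulVec_eq_lambdaMax_smul hA
  have hvv : 0 < v ⬝ᵥ v := dotProduct_self_star_pos_iff.mpr hv
  have hAB : v ⬝ᵥ A *ᵥ v ≤ v ⬝ᵥ B *ᵥ v := by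
    have := h.dotProduct_mulVec_nonneg v
    rw [star_trivial, sub_mulVec, dotProduct_sub] at this
    linarith
  rw [hAv, dotProduct_smul, smul_eq_mul] at hAB
  nlinarith [dotProduct_mulVec_le_lambdaMax_mul hB v]

theorem mul_lambdaMax_le_lambdaMax_smul [NeZero m] (hA : A.IsHermitian) (c : ℝ) :
    c * lambdaMax A ≤ lambdaMax (c • A) := by
  obtain ⟨v, hv, hAv⟩ := exists_mulVec_eq_lambdaMax_smul hA
  refine le_lambdaMax_of_mem_spectrum
    ((exists_mulVec_eq_smul_iff_mem_spectrum _ _).mp ⟨v, hv, ?_⟩)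
  rw [smul_mulVec, hAv, smul_smul]

end LambdaMax

theorem dirVec_apply (n : ℕ) (j i : Fin n) :
    dirVec n j i = if i = j then -1 else (n : ℝ) - 1 := by
  by_cases hij : i = j
  · subst hij
    simp [dirVec, coVec, unitVec]
  · simp [dirVec, coVec, unitVec, hij]

theorem exists_le_smul_dirVec_of_iInf_le {n : ℕ} (hn : 2 ≤ n) {d : Fin n → ℝ}
    (h : ⨅ i, d i ≤ -(1 / ((n : ℝ) - 1)) * ⨆ i, d i) :
    ∃ j, ∃ c : ℝ, 0 ≤ c ∧ ‖d‖ ≤ ((n : ℝ) - 1) * c ∧ d ≤ c • dirVec n j := by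
  have : NeZero n := ⟨by omega⟩
  have ht : (1 : ℝ) ≤ (n : ℝ) - 1 := by
    have : (2 : ℝ) ≤ n := by exact_mod_cast hn
    linarith
  obtain ⟨j, hj⟩ := exists_eq_ciInf_of_finite (f := d)
  have hmin : ∀ i, d j ≤ d i := fun i => hj ▸ ciInf_le (Finite.bddBelow_range d) i
  have hmax : ∀ i, d i ≤ ((n : ℝ) - 1) * -d j := by
    intro i
    have hM := le_ciSup (Finite.bddAbove_range d) i
    rw [← hj, neg_mul, one_div, inv_mul_eq_div, le_neg, div_le_iff₀' (by linarith)] at h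
    linarith
  have hc : 0 ≤ -d j := by nlinarith [hmax j]
  refine ⟨j, -d j, hc, ?_, fun i => ?_⟩
  · refine (pi_norm_le_iff_of_nonneg (by positivity)).mpr fun i => abs_le.mpr ⟨?_, hmax i⟩
    nlinarith [hmin i]
  · rw [Pi.smul_apply, dirVec_apply, smul_eq_mul]
    split_ifs with hij
    · simp [hij]
    · linarith [hmax i]

theorem min_gt_of_lambdaMax_lt_general {n m : ℕ} (hn : 2 ≤ n) (hm : 2 ≤ m)
    (F' : (Fin n → ℝ) → (Fin n → ℝ) →L[ℝ] Matrix (Fin m) (Fin m) ℝ)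
    (hF'_symm : ∀ x ∈ posOrth n, ∀ d : Fin n → ℝ, (F' x d).IsSymm)
    (hmono : ∀ x ∈ posOrth n, ∀ d : Fin n → ℝ, 0 ≤ d → loewnerLE (F' x d) 0)
    (x : Fin n → ℝ) (hx : x ∈ posOrth n)
    (hcrit : ∀ j : Fin n, ¬ loewnerLE (F' x (dirVec n j)) 0)
    (lam : ℝ) (hlam : IsLeast {r : ℝ | ∃ j : Fin n, r = lambdaMax (F' x (dirVec n j))} lam) :
    ∀ d : Fin n → ℝ, lambdaMax (F' x d) < lam * ‖d‖ / ((n:ℝ) - 1) →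
      -(1 / ((n:ℝ) - 1)) * (⨆ j, d j) < ⨅ j, d j := by
  intro d hlt
  have : NeZero m := ⟨by omega⟩
  have herm (v : Fin n → ℝ) : (F' x v).IsHermitian :=
    isHermitian_iff_isSymm.mpr (hF'_symm x hx v)
  have ht : (0 : ℝ) < (n : ℝ) - 1 := by
    have : (2 : ℝ) ≤ n := by exact_mod_cast hn
    linarith
  by_contra hcon
  obtain ⟨j, c, hc, hnorm, hle⟩ := exists_le_smul_dirVec_of_iInf_le hn (not_lt.mp hcon)
  have hlam_nonneg : 0 ≤ lam := by
    obtain ⟨i, rfl⟩ := hlam.1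
    exact (lambdaMax_pos_of_not_loewnerLE_zero (herm _) (hcrit i)).le
  have hFd : loewnerLE (F' x (c • dirVec n j)) (F' x d) := by
    simpa [loewnerLE, map_sub] using hmono x hx _ (sub_nonneg.mpr hle)
  refine hlt.not_ge ?_
  calc lam * ‖d‖ / ((n : ℝ) - 1) ≤ lam * c := by
        rw [div_le_iff₀ ht, mul_assoc]
        exact mul_le_mul_of_nonneg_left (by linarith) hlam_nonneg
    _ ≤ c * lambdaMax (F' x (dirVec n j)) := by
        rw [mul_comm]
        exact mul_le_mul_of_nonneg_left (hlam.2 ⟨j, rfl⟩) hc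
    _ ≤ lambdaMax (F' x (c • dirVec n j)) := by
        rw [map_smul]
        exact mul_lambdaMax_le_lambdaMax_smul (herm _) c
    _ ≤ lambdaMax (F' x d) := lambdaMax_mono (herm _) (herm _) hFd

/-- equation (12). Without convexity: if `F'(x)((n-1)e_j' - e_j) ⋠ 0` for
all `j` and `λ := min_j λ_max(F'(x)((n-1)e_j' - e_j))`, then
`λ_max(F'(x)d) < λ‖d‖_∞/(n-1)` implies `min_j d_j > -(1/(n-1)) max_j d_j`. -/
theorem min_gt_of_lambdaMax_lt {n m : ℕ} (hn : 2 ≤ n) (hm : 2 ≤ m)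
    (F : (Fin n → ℝ) → Matrix (Fin m) (Fin m) ℝ)
    (F' : (Fin n → ℝ) → (Fin n → ℝ) →L[ℝ] Matrix (Fin m) (Fin m) ℝ)
    (hF_symm : ∀ x ∈ posOrth n, (F x).IsSymm)
    (hF'_symm : ∀ x ∈ posOrth n, ∀ d : Fin n → ℝ, (F' x d).IsSymm)
    (hderiv : ∀ x ∈ posOrth n, HasFDerivAt F (F' x) x)
    (hcont : ContinuousOn F' (posOrth n))
    (hmono : ∀ x ∈ posOrth n, ∀ d : Fin n → ℝ, 0 ≤ d → loewnerLE (F' x d) 0)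
    (x : Fin n → ℝ) (hx : x ∈ posOrth n)
    (hcrit : ∀ j : Fin n, ¬ loewnerLE (F' x (dirVec n j)) 0)
    (lam : ℝ) (hlam : IsLeast {r : ℝ | ∃ j : Fin n, r = lambdaMax (F' x (dirVec n j))} lam) :
    ∀ d : Fin n → ℝ, lambdaMax (F' x d) < lam * ‖d‖ / ((n:ℝ) - 1) →
      -(1 / ((n:ℝ) - 1)) * (⨆ j, d j) < ⨅ j, d j :=
  min_gt_of_lambdaMax_lt_general hn hm F' hF'_symm hmono x hx hcrit lam hlam
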